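/- Let (μ_n) be a norm bounded sequence in ba(𝒜), and K_n ⊆ K_{n+1} ∩ L¹(μ_n) for each n; set K = ⋃_n K_n. Assume sup_k limsup_n ‖|μ_n| ∧ |μ_k|‖ > 0 and limsup_n ‖f‖_{L¹(μ_n)} < ∞ for every f ∈ K. Then there exists a finitely additive probability μ on 𝒜 such that K ⊆ L¹(μ). -/

import Mathlib

/-!
Pick `k` with `limsup_n ‖|μ_n| ∧ |μ_k|‖ > 0`. The charges `ν_n = |μ_n| ∧ |μ_k|` are
nonnegative and dominated both by `|μ_k|` and by `|μ_n|`. Along an ultrafilter `U ≥ atTop` on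
which `‖ν_n‖` stays above half that limsup they converge setwise (by compactness) to a charge
`λ` with `λ(Ω) > 0`, and `λ / λ(Ω)` is the required probability.

Measurability and integrability pass from the `ν_n` to `λ` through one exhaustion argument: if
`ν_i(B_i) < β` for `U`-many `i`, then some finite intersection `⋂_{i ∈ F} B_i` has `λ`-mass
below any `c > 2β`, since otherwise each further `B_n` would cut at least `c/2 - β` of
`|μ_k|`-mass off the intersection. Covering the bad sets of simple approximants in this way and
gluing the approximants gives measurability. Applied to the level sets `{|f| > 2^(s+1)}` it
gives `λ*(|f| > 2^(s+1)) ≤ 2 lim_U ν_n*(|f| > 2^(s+1))`, and the dyadic form of the layer cake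
integral turns this into `‖f‖_{L¹(λ)} ≤ 2 λ(Ω) + 4 b` whenever `‖f‖_{L¹(ν_n)} ≤ b` for
`U`-many `n`.
-/

noncomputable section
open Filter Set

variable {Ω : Type}

/-- `C` is an algebra of subsets of `Ω`. -/
def IsSetAlg (C : Set (Set Ω)) : Prop :=
  ∅ ∈ C ∧ (∀ A ∈ C, Aᶜ ∈ C) ∧ ∀ A ∈ C, ∀ B ∈ C, A ∪ B ∈ C

/-- `μ` is finitely additive on the algebra `C`. -/
def IsFinAdd (C : Set (Set Ω)) (μ : Set Ω → ℝ) : Prop :=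
  μ ∅ = 0 ∧ ∀ A ∈ C, ∀ B ∈ C, Disjoint A B → μ (A ∪ B) = μ A + μ B

/-- `π` is a partition of `A` into finitely many members of `C`. -/
def IsPartition (C : Set (Set Ω)) (π : Finset (Set Ω)) (A : Set Ω) : Prop :=
  (∀ E ∈ π, E ∈ C) ∧ (π : Set (Set Ω)).PairwiseDisjoint id ∧
    ⋃₀ (π : Set (Set Ω)) = A

/-- The set of partial variation sums of `μ` over finite `C`-partitions of `A`. -/
def varSums (C : Set (Set Ω)) (μ : Set Ω → ℝ) (A : Set Ω) : Set ℝ :=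
  {x | ∃ π : Finset (Set Ω), IsPartition C π A ∧ x = ∑ E ∈ π, |μ E|}

/-- The total variation `|μ|(A)`. -/
def totalVar (C : Set (Set Ω)) (μ : Set Ω → ℝ) (A : Set Ω) : ℝ :=
  sSup (varSums C μ A)

/-- The total variation norm `‖μ‖ = |μ|(Ω)`. -/
def tvNorm (C : Set (Set Ω)) (μ : Set Ω → ℝ) : ℝ :=
  totalVar C μ univ

/-- `μ` has bounded total variation. -/
def BddVar (C : Set (Set Ω)) (μ : Set Ω → ℝ) : Prop :=
  BddAbove (varSums C μ univ)

/-- `μ ∈ ba(C)`: finitely additive with bounded total variation. -/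
def Memba (C : Set (Set Ω)) (μ : Set Ω → ℝ) : Prop :=
  IsFinAdd C μ ∧ BddVar C μ

/-- The lattice infimum `μ ∧ ν` in `ba(C)`. -/
def baInf (C : Set (Set Ω)) (μ ν : Set Ω → ℝ) (A : Set Ω) : ℝ :=
  sInf {x | ∃ B ∈ C, x = μ (A ∩ B) + ν (A ∩ Bᶜ)}

/-- `l` is a finitely additive probability on `C`. -/
def IsFAProb (C : Set (Set Ω)) (l : Set Ω → ℝ) : Prop :=
  Memba C l ∧ (∀ A ∈ C, 0 ≤ l A) ∧ l univ = 1

/-- `ξ ≪ l` : (ε-δ) absolute continuity. -/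
def AbsCont (C : Set (Set Ω)) (ξ l : Set Ω → ℝ) : Prop :=
  ∀ ε > (0:ℝ), ∃ δ > (0:ℝ), ∀ A ∈ C, l A < δ → totalVar C ξ A < ε

/-- The tail sets `{F n, F (n+1), ...}` of a sequence of set functions. -/
def tailSet (F : ℕ → Set Ω → ℝ) (n : ℕ) : Set (Set Ω → ℝ) :=
  {g | ∃ i, n ≤ i ∧ g = F i}

/-- The outer measure generated by `l` on `C`. -/
def outerM (C : Set (Set Ω)) (l : Set Ω → ℝ) (B : Set Ω) : ℝ :=
  sInf {x | ∃ A ∈ C, B ⊆ A ∧ x = l A}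

/-- `h` is a simple `C`-measurable function. -/
def IsSimpleFn (C : Set (Set Ω)) (h : Ω → ℝ) : Prop :=
  (Set.range h).Finite ∧ ∀ c : ℝ, {ω | h ω = c} ∈ C

/-- `f` is `l`-measurable: approximable in `l`-outer measure by simple functions. -/
def FAMeasurable (C : Set (Set Ω)) (l : Set Ω → ℝ) (f : Ω → ℝ) : Prop :=
  ∀ ε > (0:ℝ), ∃ h : Ω → ℝ, IsSimpleFn C h ∧ outerM C l {ω | ε < |f ω - h ω|} < ε

/-- The finitely additive `L¹(l)` (upper) norm, via the layer cake formula. -/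
def faL1 (C : Set (Set Ω)) (l : Set Ω → ℝ) (f : Ω → ℝ) : ENNReal :=
  ∫⁻ t in Set.Ioi (0:ℝ), ENNReal.ofReal (outerM C l {ω | t < |f ω|})

/-- `f ∈ L¹(l)` in the finitely additive (Dunford–Schwartz) sense. -/
def MemFAL1 (C : Set (Set Ω)) (l : Set Ω → ℝ) (f : Ω → ℝ) : Prop :=
  FAMeasurable C l f ∧ faL1 C l f < ⊤

open Function Topology MeasureTheory
open scoped ENNReal Pointwise

variable {ι : Type*} {C : Set (Set Ω)}

theorem IsCompact.exists_tendsto_ultrafilter {X : Type*} [TopologicalSpace X] {s : Set X}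
    (hs : IsCompact s) (U : Ultrafilter ι) {g : ι → X} (hg : ∀ i, g i ∈ s) :
    ∃ x ∈ s, Tendsto g U (𝓝 x) :=
  hs.ultrafilter_le_nhds' (U.map g) (Ultrafilter.mem_map.2 (univ_mem' hg))

theorem exists_ultrafilter_le_eventually_lt_of_lt_limsup {β : Type*}
    [ConditionallyCompleteLinearOrder β] {u : ι → β} {L : Filter ι} {b : β}
    (hu : L.IsCoboundedUnder (· ≤ ·) u) (h : b < limsup u L) :
    ∃ U : Ultrafilter ι, ↑U ≤ L ∧ ∀ᶠ i in U, b < u i := by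
  have := frequently_iff_neBot.1 (frequently_lt_of_lt_limsup hu h)
  obtain ⟨U, hU⟩ := exists_ultrafilter_le (L ⊓ 𝓟 {i | b < u i})
  exact ⟨U, hU.trans inf_le_left, hU (mem_inf_of_right (mem_principal_self _))⟩

theorem IsSetAlg.isSetAlgebra (hC : IsSetAlg C) : IsSetAlgebra C :=
  ⟨hC.1, fun A hA => hC.2.1 A hA, fun A B hA hB => hC.2.2 A hA B hB⟩

theorem IsPartition.sUnion_mem (hC : IsSetAlgebra C) {π : Finset (Set Ω)} {S : Set Ω}
    (hπ : IsPartition C π S) : S ∈ C := by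
  rw [← hπ.2.2, sUnion_eq_biUnion, Finset.set_biUnion_coe]
  exact hC.biUnion_mem π hπ.1

theorem IsPartition.singleton {A : Set Ω} (hA : A ∈ C) : IsPartition C {A} A :=
  ⟨by simpa using hA, by simp, by simp⟩

theorem IsPartition.subset {π : Finset (Set Ω)} {S E : Set Ω} (hπ : IsPartition C π S)
    (hE : E ∈ π) : E ⊆ S :=
  hπ.2.2 ▸ subset_sUnion_of_mem hE

theorem IsPartition.union [DecidableEq (Set Ω)] {π σ : Finset (Set Ω)} {A B : Set Ω}
    (hπ : IsPartition C π A) (hσ : IsPartition C σ B) (hAB : Disjoint A B) :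
    IsPartition C (π ∪ σ) (A ∪ B) := by
  refine ⟨fun E hE => (Finset.mem_union.1 hE).elim (hπ.1 E) (hσ.1 E), ?_, ?_⟩
  · rw [Finset.coe_union, pairwiseDisjoint_union]
    exact ⟨hπ.2.1, hσ.2.1, fun E hE E' hE' _ =>
      hAB.mono (hπ.subset hE) (hσ.subset hE')⟩
  · rw [Finset.coe_union, sUnion_union, hπ.2.2, hσ.2.2]

theorem IsPartition.image_inter [DecidableEq (Set Ω)] {π : Finset (Set Ω)} {S T : Set Ω}
    (hC : IsSetAlgebra C) (hπ : IsPartition C π S) (hT : T ∈ C) (hTS : T ⊆ S) :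
    IsPartition C (π.image (· ∩ T)) T := by
  refine ⟨?_, ?_, ?_⟩
  · simp only [Finset.mem_image, forall_exists_index, and_imp, forall_apply_eq_imp_iff₂]
    exact fun E hE => hC.inter_mem (hπ.1 E hE) hT
  · rw [Finset.coe_image]
    refine fun _ ⟨E, hE, hV⟩ _ ⟨E', hE', hV'⟩ hne => hV ▸ hV' ▸ ?_
    exact (hπ.2.1 hE hE' fun h => hne (hV ▸ hV' ▸ h ▸ rfl)).mono
      inter_subset_left inter_subset_left
  · rw [Finset.coe_image, sUnion_image, ← iUnion₂_inter, ← sUnion_eq_biUnion, hπ.2.2,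
      inter_eq_right.2 hTS]

namespace IsFinAdd

variable {ξ : Set Ω → ℝ} {A B : Set Ω}

theorem inter_add_diff (hC : IsSetAlgebra C) (hξ : IsFinAdd C ξ) (hA : A ∈ C) (hB : B ∈ C) :
    ξ (A ∩ B) + ξ (A \ B) = ξ A := by
  rw [← hξ.2 _ (hC.inter_mem hA hB) _ (hC.sdiff_mem hA hB)
    disjoint_sdiff_inter.symm, inter_union_sdiff]

theorem mono (hC : IsSetAlgebra C) (hξ : IsFinAdd C ξ) (hξ0 : 0 ≤ ξ) (hA : A ∈ C)
    (hB : B ∈ C) (hAB : A ⊆ B) : ξ A ≤ ξ B := by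
  rw [← hξ.inter_add_diff hC hB hA, inter_eq_right.2 hAB]
  linarith [show 0 ≤ ξ (B \ A) from hξ0 _]

theorem eq_sum_of_isPartition (hC : IsSetAlgebra C) (hξ : IsFinAdd C ξ)
    {π : Finset (Set Ω)} {S : Set Ω} (hπ : IsPartition C π S) : ξ S = ∑ E ∈ π, ξ E := by
  classical
  obtain ⟨hπC, hdisj, rfl⟩ := hπ
  induction π using Finset.induction_on with
  | empty => simpa using hξ.1
  | insert a s ha ih =>
    have hsC : ∀ E ∈ s, E ∈ C := fun E hE => hπC E (Finset.mem_insert_of_mem hE)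
    rw [Finset.coe_insert] at hdisj
    rw [Finset.coe_insert, sUnion_insert, Finset.sum_insert ha,
      hξ.2 _ (hπC a (Finset.mem_insert_self a s)) _
        (IsPartition.sUnion_mem hC ⟨hsC, hdisj.subset (subset_insert _ _), rfl⟩)
        (disjoint_sUnion_right.2 fun E hE =>
          hdisj (mem_insert a _) (mem_insert_of_mem a hE) fun h => ha (h ▸ hE)),
      ih hsC (hdisj.subset (subset_insert _ _))]

theorem div_const (hξ : IsFinAdd C ξ) (q : ℝ) : IsFinAdd C (fun A => ξ A / q) :=
  ⟨by simp [hξ.1], fun A hA B hB hAB => by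
    simp only [hξ.2 A hA B hB hAB, add_div]⟩

theorem of_tendsto {L : Filter ι} [L.NeBot] {ν : ι → Set Ω → ℝ} {lam : Set Ω → ℝ}
    (hν : ∀ i, IsFinAdd C (ν i)) (hlim : Tendsto ν L (𝓝 lam)) : IsFinAdd C lam := by
  have hpt := tendsto_pi_nhds.1 hlim
  refine ⟨tendsto_nhds_unique (hpt ∅) (by simp [fun i => (hν i).1]), fun A hA B hB hAB => ?_⟩
  refine tendsto_nhds_unique (hpt (A ∪ B)) ?_
  simpa [fun i => (hν i).2 A hA B hB hAB] using (hpt A).add (hpt B)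

end IsFinAdd

section TotalVariation

variable {μ : Set Ω → ℝ} {A B S : Set Ω}

theorem nonneg_of_mem_varSums {x : ℝ} (hx : x ∈ varSums C μ S) : 0 ≤ x := by
  obtain ⟨π, -, rfl⟩ := hx
  exact Finset.sum_nonneg fun E _ => abs_nonneg _

theorem totalVar_nonneg : 0 ≤ totalVar C μ := fun _ =>
  Real.sSup_nonneg fun _ => nonneg_of_mem_varSums

theorem abs_mem_varSums (hA : A ∈ C) : |μ A| ∈ varSums C μ A :=
  ⟨{A}, IsPartition.singleton hA, by simp⟩

theorem add_mem_varSums (hμ : μ ∅ = 0) (hAB : Disjoint A B) {x y : ℝ}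
    (hx : x ∈ varSums C μ A) (hy : y ∈ varSums C μ B) : x + y ∈ varSums C μ (A ∪ B) := by
  classical
  obtain ⟨π, hπ, rfl⟩ := hx
  obtain ⟨σ, hσ, rfl⟩ := hy
  refine ⟨π ∪ σ, hπ.union hσ hAB, ?_⟩
  have hcommon : ∑ E ∈ π ∩ σ, |μ E| = 0 := Finset.sum_eq_zero fun E hE => by
    obtain ⟨hEπ, hEσ⟩ := Finset.mem_inter.1 hE
    rw [subset_empty_iff.1 (hAB (hπ.subset hEπ) (hσ.subset hEσ)), hμ, abs_zero]
  rw [← Finset.sum_union_inter, hcommon, add_zero]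

/-- A variation sum over a partition of `S` is completed to one over `univ` by adding `Sᶜ`. -/
theorem varSums_bddAbove (hC : IsSetAlgebra C) (hμ : Memba C μ) (S : Set Ω) :
    BddAbove (varSums C μ S) := by
  obtain ⟨M, hM⟩ := hμ.2
  refine ⟨M, fun x hx => ?_⟩
  have ⟨_, hπ, _⟩ := hx
  have hSc : Sᶜ ∈ C := hC.compl_mem (hπ.sUnion_mem hC)
  have := hM (union_compl_self S ▸ add_mem_varSums hμ.1.1 disjoint_compl_right hx
    (abs_mem_varSums hSc))
  linarith [abs_nonneg (μ Sᶜ)]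

theorem sum_abs_inter_mem_varSums (hC : IsSetAlgebra C) (hμ : μ ∅ = 0) {π : Finset (Set Ω)}
    (hπ : IsPartition C π S) {T : Set Ω} (hT : T ∈ C) (hTS : T ⊆ S) :
    ∑ E ∈ π, |μ (E ∩ T)| ∈ varSums C μ T := by
  classical
  refine ⟨_, hπ.image_inter hC hT hTS, (Finset.sum_image_of_pairwise_eq_zero
    (f := (· ∩ T)) (g := fun V => |μ V|) ?_).symm⟩
  intro E hE E' hE' hne hEE'
  have hempty : E ∩ T = ∅ := subset_empty_iff.1 fun x hx =>
    (hπ.2.1 hE hE' hne) (singleton_subset_iff.2 hx.1)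
      (singleton_subset_iff.2 (hEE' ▸ hx).1) rfl
  simp [hempty, hμ]

theorem totalVar_union_le (hC : IsSetAlgebra C) (hμ : Memba C μ) (hA : A ∈ C) (hB : B ∈ C)
    (hAB : Disjoint A B) : totalVar C μ (A ∪ B) ≤ totalVar C μ A + totalVar C μ B := by
  refine Real.sSup_le ?_ (add_nonneg (totalVar_nonneg A) (totalVar_nonneg B))
  rintro x ⟨π, hπ, rfl⟩
  have hsplit : ∀ E ∈ π, |μ E| ≤ |μ (E ∩ A)| + |μ (E ∩ B)| := fun E hE => by
    have hEC := hπ.1 E hE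
    calc |μ E| = |μ (E ∩ A ∪ E ∩ B)| := by
          rw [← inter_union_distrib_left, inter_eq_left.2 (hπ.subset hE)]
      _ = |μ (E ∩ A) + μ (E ∩ B)| := by
          rw [hμ.1.2 _ (hC.inter_mem hEC hA) _ (hC.inter_mem hEC hB)
            (hAB.mono inter_subset_right inter_subset_right)]
      _ ≤ |μ (E ∩ A)| + |μ (E ∩ B)| := abs_add_le _ _
  calc ∑ E ∈ π, |μ E| ≤ ∑ E ∈ π, |μ (E ∩ A)| + ∑ E ∈ π, |μ (E ∩ B)| := by
        rw [← Finset.sum_add_distrib]; exact Finset.sum_le_sum hsplit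
    _ ≤ totalVar C μ A + totalVar C μ B := add_le_add
        (le_csSup (varSums_bddAbove hC hμ A)
          (sum_abs_inter_mem_varSums hC hμ.1.1 hπ hA subset_union_left))
        (le_csSup (varSums_bddAbove hC hμ B)
          (sum_abs_inter_mem_varSums hC hμ.1.1 hπ hB subset_union_right))

theorem le_totalVar_union (hC : IsSetAlgebra C) (hμ : Memba C μ) (hA : A ∈ C) (hB : B ∈ C)
    (hAB : Disjoint A B) : totalVar C μ A + totalVar C μ B ≤ totalVar C μ (A ∪ B) := by
  rw [totalVar, totalVar, ← csSup_add ⟨_, abs_mem_varSums hA⟩ (varSums_bddAbove hC hμ A)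
    ⟨_, abs_mem_varSums hB⟩ (varSums_bddAbove hC hμ B)]
  refine csSup_le_csSup (varSums_bddAbove hC hμ _)
    (add_nonempty.2 ⟨⟨_, abs_mem_varSums hA⟩, ⟨_, abs_mem_varSums hB⟩⟩) ?_
  rintro _ ⟨x, hx, y, hy, rfl⟩
  exact add_mem_varSums hμ.1.1 hAB hx hy

theorem totalVar_isFinAdd (hC : IsSetAlgebra C) (hμ : Memba C μ) :
    IsFinAdd C (totalVar C μ) := by
  have hunion : ∀ A ∈ C, ∀ B ∈ C, Disjoint A B →
      totalVar C μ (A ∪ B) = totalVar C μ A + totalVar C μ B := fun A hA B hB hAB =>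
    (totalVar_union_le hC hμ hA hB hAB).antisymm (le_totalVar_union hC hμ hA hB hAB)
  have hempty := hunion ∅ hC.empty_mem ∅ hC.empty_mem (disjoint_empty _)
  rw [union_empty] at hempty
  exact ⟨by linarith, hunion⟩

theorem totalVar_eq_self (hC : IsSetAlgebra C) (hμ : IsFinAdd C μ) (hμ0 : 0 ≤ μ)
    (hS : S ∈ C) : totalVar C μ S = μ S := by
  have hvar : varSums C μ S = {μ S} := by
    refine subset_antisymm ?_ (singleton_subset_iff.2 (abs_of_nonneg (hμ0 S) ▸
      abs_mem_varSums hS))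
    rintro x ⟨π, hπ, rfl⟩
    rw [mem_singleton_iff, hμ.eq_sum_of_isPartition hC hπ]
    exact Finset.sum_congr rfl fun E _ => abs_of_nonneg (hμ0 E)
  rw [totalVar, hvar, csSup_singleton]

end TotalVariation

theorem isFAProb_div_univ (hC : IsSetAlgebra C) {lam : Set Ω → ℝ} (hlam : IsFinAdd C lam)
    (hlam₀ : 0 ≤ lam) (hpos : 0 < lam univ) : IsFAProb C (fun A => lam A / lam univ) := by
  have hm := hlam.div_const (lam univ)
  have hm₀ : ∀ A, 0 ≤ lam A / lam univ := fun A => div_nonneg (hlam₀ A) hpos.le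
  refine ⟨⟨hm, 1, ?_⟩, fun A _ => hm₀ A, div_self hpos.ne'⟩
  rintro _ ⟨π, hπ, rfl⟩
  rw [Finset.sum_congr rfl fun E _ => abs_of_nonneg (hm₀ E), ← hm.eq_sum_of_isPartition hC hπ,
    div_self hpos.ne']

section LatticeInf

variable {l l' : Set Ω → ℝ} {A A' : Set Ω}

def splitSums (C : Set (Set Ω)) (l l' : Set Ω → ℝ) (A : Set Ω) : Set ℝ :=
  {x | ∃ B ∈ C, x = l (A ∩ B) + l' (A ∩ Bᶜ)}

theorem baInf_eq_sInf_splitSums : baInf C l l' A = sInf (splitSums C l l' A) := rfl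

theorem splitSums_nonempty (hC : IsSetAlgebra C) : (splitSums C l l' A).Nonempty :=
  ⟨_, ∅, hC.empty_mem, rfl⟩

theorem splitSums_bddBelow (hl : 0 ≤ l) (hl' : 0 ≤ l') : BddBelow (splitSums C l l' A) :=
  ⟨0, by rintro _ ⟨B, -, rfl⟩; exact add_nonneg (hl _) (hl' _)⟩

theorem baInf_nonneg (hl : 0 ≤ l) (hl' : 0 ≤ l') : 0 ≤ baInf C l l' := fun _ =>
  Real.sInf_nonneg (by rintro _ ⟨B, -, rfl⟩; exact add_nonneg (hl _) (hl' _))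

theorem baInf_le_left (hC : IsSetAlgebra C) (hl : 0 ≤ l) (hl' : 0 ≤ l') (hl'₀ : l' ∅ = 0) :
    baInf C l l' ≤ l := fun A =>
  csInf_le (splitSums_bddBelow hl hl') ⟨univ, hC.univ_mem, by simp [hl'₀]⟩

theorem baInf_le_right (hC : IsSetAlgebra C) (hl : 0 ≤ l) (hl' : 0 ≤ l') (hl₀ : l ∅ = 0) :
    baInf C l l' ≤ l' := fun A =>
  csInf_le (splitSums_bddBelow hl hl') ⟨∅, hC.empty_mem, by simp [hl₀]⟩

theorem splitSums_union (hC : IsSetAlgebra C) (hl : IsFinAdd C l) (hl' : IsFinAdd C l')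
    (hA : A ∈ C) (hA' : A' ∈ C) (hAA' : Disjoint A A') :
    splitSums C l l' (A ∪ A') = splitSums C l l' A + splitSums C l l' A' := by
  have hsplit : ∀ D ∈ C, l ((A ∪ A') ∩ D) + l' ((A ∪ A') ∩ Dᶜ) =
      (l (A ∩ D) + l' (A ∩ Dᶜ)) + (l (A' ∩ D) + l' (A' ∩ Dᶜ)) := fun D hD => by
    rw [union_inter_distrib_right, union_inter_distrib_right,
      hl.2 _ (hC.inter_mem hA hD) _ (hC.inter_mem hA' hD)
        (hAA'.mono inter_subset_left inter_subset_left),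
      hl'.2 _ (hC.inter_mem hA (hC.compl_mem hD)) _ (hC.inter_mem hA' (hC.compl_mem hD))
        (hAA'.mono inter_subset_left inter_subset_left)]
    ring
  ext x
  constructor
  · rintro ⟨B, hB, rfl⟩
    exact ⟨_, ⟨B, hB, rfl⟩, _, ⟨B, hB, rfl⟩, (hsplit B hB).symm⟩
  · rintro ⟨_, ⟨B, hB, rfl⟩, _, ⟨B', hB', rfl⟩, rfl⟩
    have hD : A ∩ B ∪ A' ∩ B' ∈ C :=
      hC.union_mem (hC.inter_mem hA hB) (hC.inter_mem hA' hB')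
    have hdisj := disjoint_left.1 hAA'
    refine ⟨_, hD, ?_⟩
    rw [hsplit _ hD]
    congr 3 <;> ext ω <;> simp only [mem_inter_iff, mem_union, mem_compl_iff] <;>
      have := @hdisj ω <;> tauto

theorem baInf_isFinAdd (hC : IsSetAlgebra C) (hl : IsFinAdd C l) (hl' : IsFinAdd C l')
    (hl₀ : 0 ≤ l) (hl'₀ : 0 ≤ l') : IsFinAdd C (baInf C l l') := by
  refine ⟨le_antisymm ((baInf_le_right hC hl₀ hl'₀ hl.1 ∅).trans hl'.1.le)
    (baInf_nonneg hl₀ hl'₀ ∅), fun A hA A' hA' hAA' => ?_⟩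
  rw [baInf_eq_sInf_splitSums, splitSums_union hC hl hl' hA hA' hAA',
    csInf_add (splitSums_nonempty hC) (splitSums_bddBelow hl₀ hl'₀)
      (splitSums_nonempty hC) (splitSums_bddBelow hl₀ hl'₀)]
  rfl

end LatticeInf

section OuterMeasure

variable {l l' : Set Ω → ℝ} {S S' A : Set Ω}

theorem outerM_set_nonempty (hC : IsSetAlgebra C) :
    {x | ∃ A ∈ C, S ⊆ A ∧ x = l A}.Nonempty :=
  ⟨_, univ, hC.univ_mem, subset_univ S, rfl⟩

theorem outerM_nonneg (hl : 0 ≤ l) : 0 ≤ outerM C l := fun _ =>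
  Real.sInf_nonneg (by rintro _ ⟨A, -, -, rfl⟩; exact hl A)

theorem outerM_le_of_subset (hl : 0 ≤ l) (hA : A ∈ C) (hSA : S ⊆ A) : outerM C l S ≤ l A :=
  csInf_le ⟨0, by rintro _ ⟨A, -, -, rfl⟩; exact hl A⟩ ⟨A, hA, hSA, rfl⟩

theorem exists_subset_lt_of_outerM_lt (hC : IsSetAlgebra C) {c : ℝ} (h : outerM C l S < c) :
    ∃ A ∈ C, S ⊆ A ∧ l A < c := by
  obtain ⟨_, ⟨A, hA, hSA, rfl⟩, hlt⟩ := exists_lt_of_csInf_lt (outerM_set_nonempty hC) h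
  exact ⟨A, hA, hSA, hlt⟩

theorem outerM_mono (hC : IsSetAlgebra C) (hl : 0 ≤ l) (h : S ⊆ S') :
    outerM C l S ≤ outerM C l S' :=
  le_csInf (outerM_set_nonempty hC) fun _ ⟨_, hA, hS'A, hx⟩ =>
    hx ▸ outerM_le_of_subset hl hA (h.trans hS'A)

theorem outerM_mono_left (hC : IsSetAlgebra C) (hl : 0 ≤ l) (hll' : l ≤ l') :
    outerM C l S ≤ outerM C l' S :=
  le_csInf (outerM_set_nonempty hC) fun _ ⟨_, hA, hSA, hx⟩ =>
    hx ▸ (outerM_le_of_subset hl hA hSA).trans (hll' _)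

theorem outerM_div_le (hC : IsSetAlgebra C) (hl : 0 ≤ l) {q : ℝ} (hq : 0 < q) :
    outerM C (fun A => l A / q) S ≤ outerM C l S / q := by
  rw [le_div_iff₀ hq]
  refine le_csInf (outerM_set_nonempty hC) fun _ ⟨A, hA, hSA, hx⟩ => ?_
  rw [hx, ← le_div_iff₀ hq]
  exact outerM_le_of_subset (fun B => div_nonneg (hl B) hq.le) hA hSA

end OuterMeasure

section SimpleFunctions

theorem isSimpleFn_const (hC : IsSetAlgebra C) (c : ℝ) : IsSimpleFn C (fun _ : Ω => c) := by
  refine ⟨(finite_singleton c).subset (range_const_subset), fun d => ?_⟩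
  by_cases h : c = d <;> simp [h, hC.univ_mem, hC.empty_mem]

theorem IsSimpleFn.piecewise (hC : IsSetAlgebra C) {s : Set Ω} [DecidablePred (· ∈ s)]
    (hs : s ∈ C) {g h : Ω → ℝ} (hg : IsSimpleFn C g) (hh : IsSimpleFn C h) :
    IsSimpleFn C (s.piecewise g h) := by
  refine ⟨(hg.1.union hh.1).subset ?_, fun c => ?_⟩
  · rw [range_piecewise]
    exact union_subset_union (image_subset_range _ _) (image_subset_range _ _)
  · have hlevel :
        {ω | s.piecewise g h ω = c} = s ∩ {ω | g ω = c} ∪ sᶜ ∩ {ω | h ω = c} := by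
      ext ω
      by_cases hω : ω ∈ s <;> simp [hω]
    rw [hlevel]
    exact hC.union_mem (hC.inter_mem hs (hg.2 c)) (hC.inter_mem (hC.compl_mem hs) (hh.2 c))

open Classical in
def patch (h : ι → Ω → ℝ) (B : ι → Set Ω) : List ι → Ω → ℝ
  | [] => 0
  | i :: is => (B i).piecewise (patch h B is) (h i)

theorem isSimpleFn_patch (hC : IsSetAlgebra C) {h : ι → Ω → ℝ} {B : ι → Set Ω} :
    ∀ {is : List ι}, (∀ i ∈ is, IsSimpleFn C (h i) ∧ B i ∈ C) →
      IsSimpleFn C (patch h B is)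
  | [], _ => isSimpleFn_const hC 0
  | i :: is, hi => by
    obtain ⟨hhi, hBi⟩ := hi i List.mem_cons_self
    classical
    exact IsSimpleFn.piecewise hC hBi
      (isSimpleFn_patch hC fun j hj => hi j (List.mem_cons_of_mem i hj)) hhi

theorem exists_patch_eq {h : ι → Ω → ℝ} {B : ι → Set Ω} {ω : Ω} :
    ∀ {is : List ι}, (∃ i ∈ is, ω ∉ B i) →
      ∃ i ∈ is, ω ∉ B i ∧ patch h B is ω = h i ω
  | [], ⟨_, hi, _⟩ => absurd hi List.not_mem_nil
  | i :: is, hex => by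
    by_cases hω : ω ∈ B i
    · obtain ⟨j, hj, hjω⟩ := hex
      obtain ⟨k, hk, hkω, hpatch⟩ := exists_patch_eq (h := h) (B := B)
        ⟨j, (List.mem_cons.1 hj).resolve_left (by rintro rfl; exact hjω hω), hjω⟩
      exact ⟨k, List.mem_cons_of_mem i hk, hkω, by simp [patch, hω, hpatch]⟩
    · exact ⟨i, List.mem_cons_self, hω, by simp [patch, hω]⟩

end SimpleFunctions

section Integrability

variable {ν l : Set Ω → ℝ} {f : Ω → ℝ}

theorem FAMeasurable.mono (hC : IsSetAlgebra C) (hν : 0 ≤ ν) (hνl : ν ≤ l)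
    (hf : FAMeasurable C l f) : FAMeasurable C ν f := fun ε hε =>
  let ⟨h, hh, hlt⟩ := hf ε hε
  ⟨h, hh, (outerM_mono_left hC hν hνl).trans_lt hlt⟩

theorem faL1_mono (hC : IsSetAlgebra C) (hν : 0 ≤ ν) (hνl : ν ≤ l) :
    faL1 C ν f ≤ faL1 C l f :=
  lintegral_mono fun _ => ENNReal.ofReal_le_ofReal (outerM_mono_left hC hν hνl)

theorem MemFAL1.div_const (hC : IsSetAlgebra C) (hl : 0 ≤ l) {q : ℝ} (hq : 0 < q)
    (hf : MemFAL1 C l f) : MemFAL1 C (fun A => l A / q) f := by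
  refine ⟨fun ε hε => ?_, ?_⟩
  · obtain ⟨h, hh, hlt⟩ := hf.1 (min ε (ε * q)) (by positivity)
    refine ⟨h, hh, ?_⟩
    calc outerM C (fun A => l A / q) {ω | ε < |f ω - h ω|}
        ≤ outerM C l {ω | min ε (ε * q) < |f ω - h ω|} / q :=
          (outerM_div_le hC hl hq).trans (div_le_div_of_nonneg_right
            (outerM_mono hC hl fun _ (hω : ε < _) => (min_le_left _ _).trans_lt hω) hq.le)
      _ < ε := by rw [div_lt_iff₀ hq]; exact hlt.trans_le (min_le_right _ _)
  · calc faL1 C (fun A => l A / q) f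
        ≤ ∫⁻ t in Ioi (0 : ℝ),
            ENNReal.ofReal (outerM C l {ω | t < |f ω|}) * ENNReal.ofReal q⁻¹ :=
          lintegral_mono fun t => by
            rw [← ENNReal.ofReal_mul (outerM_nonneg hl _), ← div_eq_mul_inv]
            exact ENNReal.ofReal_le_ofReal (outerM_div_le hC hl hq)
      _ = faL1 C l f * ENNReal.ofReal q⁻¹ := lintegral_mul_const' _ _ ENNReal.ofReal_ne_top
      _ < ⊤ := ENNReal.mul_lt_top hf.2 ENNReal.ofReal_lt_top

end Integrability

section Dyadic

variable {l : Set Ω → ℝ} {f : Ω → ℝ}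

def dyadicSum (C : Set (Set Ω)) (l : Set Ω → ℝ) (f : Ω → ℝ) : ℝ≥0∞ :=
  ∑' s : ℕ, 2 ^ s * ENNReal.ofReal (outerM C l {ω | (2 : ℝ) ^ (s + 1) < |f ω|})

theorem ofReal_two_pow_succ_sub (s : ℕ) :
    ENNReal.ofReal ((2 : ℝ) ^ (s + 1) - 2 ^ s) = 2 ^ s := by
  rw [pow_succ, mul_two, add_sub_cancel_left, ENNReal.ofReal_pow zero_le_two,
    ENNReal.ofReal_ofNat]

theorem Ioi_zero_subset_Ioc_union_Ico :
    Ioi (0 : ℝ) ⊆ Ioc 0 2 ∪ ⋃ s : ℕ, Ico (2 ^ (s + 1)) (2 ^ (s + 2)) := by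
  intro t (ht : 0 < t)
  rcases le_or_gt t 2 with h2 | h2
  · exact Or.inl ⟨ht, h2⟩
  · obtain ⟨n, hn, hn'⟩ := exists_nat_pow_near (x := t / 2) (by linarith) one_lt_two
    refine Or.inr (mem_iUnion.2 ⟨n, ?_, ?_⟩) <;> simp only [pow_succ] at * <;> linarith

theorem dyadicSum_le_faL1 (hC : IsSetAlgebra C) (hl : 0 ≤ l) :
    dyadicSum C l f ≤ faL1 C l f := by
  have hdisj : Pairwise (Disjoint on fun s : ℕ => Ioc ((2 : ℝ) ^ s) (2 ^ (s + 1))) := by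
    simpa [Order.succ_eq_add_one] using
      (pow_right_mono₀ (one_le_two (α := ℝ))).pairwise_disjoint_on_Ioc_succ
  calc dyadicSum C l f
      ≤ ∑' s : ℕ, ∫⁻ t in Ioc ((2 : ℝ) ^ s) (2 ^ (s + 1)),
          ENNReal.ofReal (outerM C l {ω | t < |f ω|}) := by
        refine ENNReal.tsum_le_tsum fun s => ?_
        rw [← ofReal_two_pow_succ_sub, ← Real.volume_Ioc, mul_comm, ← setLIntegral_const]
        exact setLIntegral_mono' measurableSet_Ioc fun t ht => ENNReal.ofReal_le_ofReal
          (outerM_mono hC hl fun _ (hω : _ < _) => ht.2.trans_lt hω)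
    _ = ∫⁻ t in ⋃ s : ℕ, Ioc ((2 : ℝ) ^ s) (2 ^ (s + 1)),
          ENNReal.ofReal (outerM C l {ω | t < |f ω|}) :=
        (lintegral_iUnion (fun _ => measurableSet_Ioc) hdisj _).symm
    _ ≤ faL1 C l f :=
        lintegral_mono_set (iUnion_subset fun s _ ht => (pow_pos two_pos s).trans ht.1)

theorem faL1_le_dyadicSum (hC : IsSetAlgebra C) (hl : 0 ≤ l) :
    faL1 C l f ≤ 2 * ENNReal.ofReal (l univ) + 2 * dyadicSum C l f := by
  set g : ℝ → ℝ≥0∞ := fun t => ENNReal.ofReal (outerM C l {ω | t < |f ω|})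
  have hhead : ∫⁻ t in Ioc (0 : ℝ) 2, g t ≤ 2 * ENNReal.ofReal (l univ) := by
    calc ∫⁻ t in Ioc (0 : ℝ) 2, g t
        ≤ ∫⁻ _ in Ioc (0 : ℝ) 2, ENNReal.ofReal (l univ) :=
          setLIntegral_mono' measurableSet_Ioc fun t _ => ENNReal.ofReal_le_ofReal
            (outerM_le_of_subset hl hC.univ_mem (subset_univ _))
      _ = 2 * ENNReal.ofReal (l univ) := by
          rw [setLIntegral_const, Real.volume_Ioc, sub_zero, ENNReal.ofReal_ofNat, mul_comm]
  have hpiece : ∀ s : ℕ, ∫⁻ t in Ico ((2 : ℝ) ^ (s + 1)) (2 ^ (s + 2)), g t ≤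
      2 * (2 ^ s * ENNReal.ofReal (outerM C l {ω | (2 : ℝ) ^ (s + 1) < |f ω|})) := fun s => by
    calc ∫⁻ t in Ico ((2 : ℝ) ^ (s + 1)) (2 ^ (s + 2)), g t
        ≤ ∫⁻ _ in Ico ((2 : ℝ) ^ (s + 1)) (2 ^ (s + 2)),
            ENNReal.ofReal (outerM C l {ω | (2 : ℝ) ^ (s + 1) < |f ω|}) :=
          setLIntegral_mono' measurableSet_Ico fun t ht => ENNReal.ofReal_le_ofReal
            (outerM_mono hC hl fun _ (hω : _ < _) => ht.1.trans_lt hω)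
      _ = _ := by
          rw [setLIntegral_const, Real.volume_Ico, ofReal_two_pow_succ_sub, pow_succ]
          ring
  calc faL1 C l f
      ≤ ∫⁻ t in Ioc 0 2 ∪ ⋃ s : ℕ, Ico ((2 : ℝ) ^ (s + 1)) (2 ^ (s + 2)), g t :=
        lintegral_mono_set Ioi_zero_subset_Ioc_union_Ico
    _ ≤ (∫⁻ t in Ioc 0 2, g t) +
          ∑' s : ℕ, ∫⁻ t in Ico ((2 : ℝ) ^ (s + 1)) (2 ^ (s + 2)), g t :=
        (lintegral_union_le _ _ _).trans (add_le_add le_rfl (lintegral_iUnion_le _ _))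
    _ ≤ 2 * ENNReal.ofReal (l univ) + 2 * dyadicSum C l f := by
        rw [dyadicSum, ← ENNReal.tsum_mul_left]
        exact add_le_add hhead (ENNReal.tsum_le_tsum hpiece)

end Dyadic

structure DominatedCharges (C : Set (Set Ω)) (lk : Set Ω → ℝ) (ν : ι → Set Ω → ℝ) :
    Prop where
  isFinAdd_dom : IsFinAdd C lk
  isFinAdd : ∀ i, IsFinAdd C (ν i)
  nonneg : ∀ i, 0 ≤ ν i
  le_dom : ∀ i, ν i ≤ lk

theorem dominatedCharges_baInf (hC : IsSetAlgebra C) {l : ι → Set Ω → ℝ}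
    {lk : Set Ω → ℝ} (hl : ∀ i, IsFinAdd C (l i)) (hl₀ : ∀ i, 0 ≤ l i) (hlk : IsFinAdd C lk)
    (hlk₀ : 0 ≤ lk) : DominatedCharges C lk (fun i => baInf C (l i) lk) :=
  ⟨hlk, fun i => baInf_isFinAdd hC (hl i) hlk (hl₀ i) hlk₀,
    fun i => baInf_nonneg (hl₀ i) hlk₀, fun i => baInf_le_right hC (hl₀ i) hlk₀ (hl i).1⟩

namespace DominatedCharges

variable {lk lam : Set Ω → ℝ} {ν : ι → Set Ω → ℝ} {L : Filter ι} {f : Ω → ℝ}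

theorem exists_tendsto (hD : DominatedCharges C lk ν) (U : Ultrafilter ι) :
    ∃ lam, Tendsto ν U (𝓝 lam) :=
  let ⟨lam, _, hlim⟩ := (isCompact_univ_pi fun _ => isCompact_Icc).exists_tendsto_ultrafilter
    U fun i A (_ : A ∈ univ) => ⟨hD.nonneg i A, hD.le_dom i A⟩
  ⟨lam, hlim⟩

theorem nonneg_of_tendsto (hD : DominatedCharges C lk ν) [L.NeBot]
    (hlim : Tendsto ν L (𝓝 lam)) : 0 ≤ lam :=
  ge_of_tendsto' hlim hD.nonneg

theorem exists_dom_inter_le_sub (hC : IsSetAlgebra C) (hD : DominatedCharges C lk ν)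
    [L.NeBot] (hlim : Tendsto ν L (𝓝 lam)) {W : Set ι} (hW : W ∈ L) {B : ι → Set Ω}
    (hB : ∀ i ∈ W, B i ∈ C) {β c : ℝ} (hβ : ∀ i ∈ W, ν i (B i) < β) (hc : 0 < c)
    {D : Set Ω} (hDC : D ∈ C) (hDc : c ≤ lam D) :
    ∃ n ∈ W, lk (B n ∩ D) ≤ lk D - (c / 2 - β) := by
  have hev : ∀ᶠ n in L, c / 2 < ν n D :=
    (tendsto_pi_nhds.1 hlim D).eventually (lt_mem_nhds (by linarith))
  obtain ⟨n, hnW, hn : c / 2 < ν n D⟩ := Filter.nonempty_of_mem (inter_mem hW hev)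
  have hBn := hB n hnW
  have hνsplit := (hD.isFinAdd n).inter_add_diff hC hDC hBn
  have hνmono := (hD.isFinAdd n).mono hC (hD.nonneg n) (hC.inter_mem hDC hBn) hBn
    inter_subset_right
  have hlksplit := hD.isFinAdd_dom.inter_add_diff hC hDC hBn
  refine ⟨n, hnW, ?_⟩
  rw [inter_comm]
  linarith [hβ n hnW, hD.le_dom n (D \ B n)]

/-- The exhaustion argument: were all these intersections `lam`-large, one could keep
intersecting with new sets `B n` and remove at least `c / 2 - β` of `lk`-mass each time. -/
theorem exists_finset_biInter_lt (hC : IsSetAlgebra C) (hD : DominatedCharges C lk ν)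
    [L.NeBot] (hlim : Tendsto ν L (𝓝 lam)) {W : Set ι} (hW : W ∈ L) {B : ι → Set Ω}
    (hB : ∀ i ∈ W, B i ∈ C) {β c : ℝ} (hβ : ∀ i ∈ W, ν i (B i) < β)
    (hc : 2 * β < c) :
    ∃ F : Finset ι, ↑F ⊆ W ∧ lam (⋂ i ∈ F, B i) < c := by
  classical
  obtain ⟨i₀, hi₀⟩ := Filter.nonempty_of_mem hW
  have hβ₀ : 0 < β := (hD.nonneg i₀ (B i₀)).trans_lt (hβ i₀ hi₀)
  by_contra! hlarge
  have hiter : ∀ r : ℕ, ∃ F : Finset ι, ↑F ⊆ W ∧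
      lk (⋂ i ∈ F, B i) ≤ lk univ - r * (c / 2 - β) := by
    intro r
    induction r with
    | zero => exact ⟨∅, by simp, by simp⟩
    | succ r ih =>
      obtain ⟨F, hF, hle⟩ := ih
      obtain ⟨n, hnW, hn⟩ := hD.exists_dom_inter_le_sub hC hlim hW hB hβ (by linarith)
        (hC.biInter_mem F fun i hi => hB i (hF hi)) (hlarge F hF)
      refine ⟨insert n F, by simpa using insert_subset hnW hF, ?_⟩
      rw [Finset.set_biInter_insert]
      push_cast
      linarith
  obtain ⟨r, hr⟩ := exists_nat_gt (lk univ / (c / 2 - β))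
  obtain ⟨F, -, hle⟩ := hiter r
  have hlk₀ : (0 : ℝ) ≤ lk (⋂ j ∈ F, B j) := (hD.nonneg i₀ _).trans (hD.le_dom i₀ _)
  rw [div_lt_iff₀ (by linarith)] at hr
  linarith

theorem outerM_le_two_mul (hC : IsSetAlgebra C) (hD : DominatedCharges C lk ν) [L.NeBot]
    (hlim : Tendsto ν L (𝓝 lam)) {S : Set Ω} {x : ℝ}
    (hx : Tendsto (fun i => outerM C (ν i) S) L (𝓝 x)) : outerM C lam S ≤ 2 * x := by
  refine le_of_forall_pos_lt_add fun θ hθ => ?_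
  have hW : {i | outerM C (ν i) S < x + θ / 3} ∈ L := hx (Iio_mem_nhds (by linarith))
  have hcover : ∀ i ∈ {i | outerM C (ν i) S < x + θ / 3},
      ∃ B ∈ C, S ⊆ B ∧ ν i B < x + θ / 3 := fun _ hi =>
    exists_subset_lt_of_outerM_lt hC hi
  choose! B hB hSB hBlt using hcover
  obtain ⟨F, hFW, hF⟩ := hD.exists_finset_biInter_lt hC hlim hW hB hBlt
    (c := 2 * x + θ) (by linarith)
  calc outerM C lam S ≤ lam (⋂ i ∈ F, B i) :=
        outerM_le_of_subset (hD.nonneg_of_tendsto hlim)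
          (hC.biInter_mem F fun i hi => hB i (hFW hi))
          (subset_iInter₂ fun i hi => hSB i (hFW hi))
    _ < 2 * x + θ := hF

theorem faMeasurable_of_tendsto (hC : IsSetAlgebra C) (hD : DominatedCharges C lk ν)
    [L.NeBot] (hlim : Tendsto ν L (𝓝 lam)) (hf : ∀ᶠ i in L, FAMeasurable C (ν i) f) :
    FAMeasurable C lam f := by
  intro ε hε
  have hgood : ∀ i ∈ {i | FAMeasurable C (ν i) f}, ∃ h : Ω → ℝ, ∃ B ∈ C,
      IsSimpleFn C h ∧ {ω | ε / 3 < |f ω - h ω|} ⊆ B ∧ ν i B < ε / 3 := fun i hi => by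
    obtain ⟨h, hh, hlt⟩ := hi (ε / 3) (by positivity)
    obtain ⟨B, hB, hsub, hBlt⟩ := exists_subset_lt_of_outerM_lt hC hlt
    exact ⟨h, B, hB, hh, hsub, hBlt⟩
  choose! h B hB hh hsub hBlt using hgood
  obtain ⟨F, hFW, hF⟩ := hD.exists_finset_biInter_lt hC hlim hf hB hBlt (c := ε) (by linarith)
  have hFmem : ∀ i ∈ F.toList, i ∈ {i | FAMeasurable C (ν i) f} := fun i hi =>
    hFW (Finset.mem_toList.1 hi)
  refine ⟨patch h B F.toList, isSimpleFn_patch hC fun i hi => ⟨hh i (hFmem i hi),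
    hB i (hFmem i hi)⟩, ?_⟩
  -- off `⋂ i ∈ F, B i` the patch agrees with some `h j` that is `ε / 3`-close to `f`
  have hbad : {ω | ε < |f ω - patch h B F.toList ω|} ⊆ ⋂ i ∈ F, B i := by
    intro ω (hω : ε < _)
    by_contra hout
    simp only [mem_iInter₂, not_forall] at hout
    obtain ⟨i, hi, hωi⟩ := hout
    obtain ⟨j, hj, hωj, hpatch⟩ :=
      exists_patch_eq (h := h) ⟨i, Finset.mem_toList.2 hi, hωi⟩
    have hclose : ¬ ε / 3 < |f ω - h j ω| := fun hlt => hωj (hsub j (hFmem j hj) hlt)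
    rw [hpatch] at hω
    linarith
  exact (outerM_le_of_subset (hD.nonneg_of_tendsto hlim)
    (hC.biInter_mem F fun i hi => hB i (hFW hi)) hbad).trans_lt hF

theorem dyadicSum_le_of_tendsto (hC : IsSetAlgebra C) (hD : DominatedCharges C lk ν)
    {U : Ultrafilter ι} (hlim : Tendsto ν U (𝓝 lam)) {b : ℝ≥0∞}
    (hb : ∀ᶠ i in U, dyadicSum C (ν i) f ≤ b) : dyadicSum C lam f ≤ 2 * b := by
  set T : ℕ → Set Ω := fun s => {ω | (2 : ℝ) ^ (s + 1) < |f ω|}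
  have hlimits : ∀ s, ∃ x, Tendsto (fun i => outerM C (ν i) (T s)) U (𝓝 x) := fun s =>
    let ⟨x, _, hx⟩ := isCompact_Icc.exists_tendsto_ultrafilter U fun i =>
      ⟨outerM_nonneg (hD.nonneg i) (T s),
        (outerM_le_of_subset (hD.nonneg i) hC.univ_mem (subset_univ _)).trans (hD.le_dom i univ)⟩
    ⟨x, hx⟩
  choose x hx using hlimits
  refine ENNReal.tsum_le_of_sum_range_le fun R => ?_
  have hpartial : ∑ s ∈ Finset.range R, 2 ^ s * ENNReal.ofReal (x s) ≤ b :=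
    le_of_tendsto (tendsto_finsetSum _ fun s _ => ENNReal.Tendsto.const_mul
        ((ENNReal.continuous_ofReal.tendsto _).comp (hx s)) (Or.inr (by simp)))
      (hb.mono fun i hi => (ENNReal.sum_le_tsum (Finset.range R)).trans hi)
  calc ∑ s ∈ Finset.range R, 2 ^ s * ENNReal.ofReal (outerM C lam (T s))
      ≤ ∑ s ∈ Finset.range R, 2 ^ s * ENNReal.ofReal (2 * x s) := by
        gcongr with s
        exact hD.outerM_le_two_mul hC hlim (hx s)
    _ = 2 * ∑ s ∈ Finset.range R, 2 ^ s * ENNReal.ofReal (x s) := by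
        rw [Finset.mul_sum]
        refine Finset.sum_congr rfl fun s _ => ?_
        rw [ENNReal.ofReal_mul zero_le_two, ENNReal.ofReal_ofNat]
        ring
    _ ≤ 2 * b := by gcongr

theorem memFAL1_of_tendsto (hC : IsSetAlgebra C) (hD : DominatedCharges C lk ν)
    {U : Ultrafilter ι} (hlim : Tendsto ν U (𝓝 lam))
    (hf : ∀ᶠ i in U, FAMeasurable C (ν i) f) {b : ℝ≥0∞} (hb_top : b ≠ ⊤)
    (hb : ∀ᶠ i in U, faL1 C (ν i) f ≤ b) : MemFAL1 C lam f := by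
  refine ⟨hD.faMeasurable_of_tendsto hC hlim hf, ?_⟩
  have hdyadic := hD.dyadicSum_le_of_tendsto hC hlim
    (hb.mono fun i hi => (dyadicSum_le_faL1 hC (hD.nonneg i)).trans hi)
  calc faL1 C lam f ≤ 2 * ENNReal.ofReal (lam univ) + 2 * dyadicSum C lam f :=
        faL1_le_dyadicSum hC (hD.nonneg_of_tendsto hlim)
    _ ≤ 2 * ENNReal.ofReal (lam univ) + 2 * (2 * b) := by gcongr
    _ < ⊤ := by finiteness

end DominatedCharges

theorem common_L1_space_general {Ω : Type} (C : Set (Set Ω)) (hC : IsSetAlg C)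
    (μ : ℕ → Set Ω → ℝ) (hμ : ∀ n, Memba C (μ n))
    (K : ℕ → Set (Ω → ℝ))
    (hKmono : ∀ n, K n ⊆ K (n + 1))
    (hKL1 : ∀ n, ∀ f ∈ K n, MemFAL1 C (fun A => totalVar C (μ n) A) f)
    (hinf : 0 < ⨆ k : ℕ, Filter.limsup (fun n =>
      tvNorm C (baInf C (fun A => totalVar C (μ n) A)
        (fun A => totalVar C (μ k) A))) atTop)
    (hL1bdd : ∀ f ∈ ⋃ n, K n,
      Filter.limsup (fun n => faL1 C (fun A => totalVar C (μ n) A) f) atTop < ⊤) :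
    ∃ m : Set Ω → ℝ, IsFAProb C m ∧ ∀ f ∈ ⋃ n, K n, MemFAL1 C m f := by
  replace hC := hC.isSetAlgebra
  have hl n : IsFinAdd C (totalVar C (μ n)) := totalVar_isFinAdd hC (hμ n)
  obtain ⟨k, hk⟩ := exists_lt_of_lt_ciSup hinf
  have hD := dominatedCharges_baInf hC hl (fun _ => totalVar_nonneg) (hl k) totalVar_nonneg
  have hνl n : baInf C (totalVar C (μ n)) (totalVar C (μ k)) ≤ totalVar C (μ n) :=
    baInf_le_left hC totalVar_nonneg totalVar_nonneg (hl k).1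
  obtain ⟨U, hU, hUlarge⟩ := exists_ultrafilter_le_eventually_lt_of_lt_limsup
    (isCoboundedUnder_le_of_le atTop fun n => totalVar_nonneg _) (half_lt_self hk)
  obtain ⟨lam, hlim⟩ := hD.exists_tendsto U
  have hpos : 0 < lam univ := (half_pos hk).trans_le <|
    ge_of_tendsto ((continuous_apply univ).tendsto lam |>.comp hlim) <| hUlarge.mono fun n hn =>
      (hn.trans_eq (totalVar_eq_self hC (hD.isFinAdd n) (hD.nonneg n) hC.univ_mem)).le
  refine ⟨fun A => lam A / lam univ, isFAProb_div_univ hC (IsFinAdd.of_tendsto hD.isFinAdd hlim)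
    (hD.nonneg_of_tendsto hlim) hpos, fun f hf => ?_⟩
  obtain ⟨j, hj⟩ := mem_iUnion.1 hf
  have hK : ∀ᶠ n in U, f ∈ K n := (eventually_ge_atTop j).filter_mono hU |>.mono fun n hn =>
    monotone_nat_of_le_succ hKmono hn hj
  have hb := (eventually_lt_of_limsup_lt (ENNReal.lt_add_right (hL1bdd f hf).ne one_ne_zero))
    |>.filter_mono hU
  refine (hD.memFAL1_of_tendsto hC hlim ?_ (ENNReal.add_ne_top.2 ⟨(hL1bdd f hf).ne,
    ENNReal.one_ne_top⟩) ?_).div_const hC (hD.nonneg_of_tendsto hlim) hpos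
  · exact hK.mono fun n hn => (hKL1 n f hn).1.mono hC (hD.nonneg n) (hνl n)
  · exact hb.mono fun n hn => (faL1_mono hC (hD.nonneg n) (hνl n)).trans hn.le

/-- Let `(μ n)` be a norm bounded sequence in `ba(C)` and
`K n ⊆ K (n+1) ∩ L¹(μ n)`, `K = ⋃ n, K n`. If `sup_k limsup_n ‖|μ n| ∧ |μ k|‖ > 0` and
`limsup_n ‖f‖_{L¹(μ n)} < ∞` for every `f ∈ K`, then there is a finitely additive
probability `μ` with `K ⊆ L¹(μ)`. -/
theorem common_L1_space {Ω : Type} (C : Set (Set Ω)) (hC : IsSetAlg C)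
    (μ : ℕ → Set Ω → ℝ) (hμ : ∀ n, Memba C (μ n))
    (hbdd : ∃ M : ℝ, ∀ n, tvNorm C (μ n) ≤ M)
    (K : ℕ → Set (Ω → ℝ))
    (hKmono : ∀ n, K n ⊆ K (n + 1))
    (hKL1 : ∀ n, ∀ f ∈ K n, MemFAL1 C (fun A => totalVar C (μ n) A) f)
    (hinf : 0 < ⨆ k : ℕ, Filter.limsup (fun n =>
      tvNorm C (baInf C (fun A => totalVar C (μ n) A)
        (fun A => totalVar C (μ k) A))) atTop)
    (hL1bdd : ∀ f ∈ ⋃ n, K n,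
      Filter.limsup (fun n => faL1 C (fun A => totalVar C (μ n) A) f) atTop < ⊤) :
    ∃ m : Set Ω → ℝ, IsFAProb C m ∧ ∀ f ∈ ⋃ n, K n, MemFAL1 C m f :=
  common_L1_space_general C hC μ hμ K hKmono hKL1 hinf hL1bdd
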